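/- Let p and N be primes with N ≡ 1 (mod p), and χ : (Z/pZ)^× → Z_p^× a character with χ ≠ 1 and χ ≠ ω (the Teichmüller character). For each integer r with 0 < r < N, the coefficient of [r^{-1}] in the twisted Stickelberger element φ_χ = ∑_{a ∈ (Z/NpZ)^×} B̄_1(a/(Np))·χ^{-1}(a)·[a^{-1}] ∈ Q_p[(Z/NZ)^×] equals B_{1,χ^{-1}} + ∑_{a=1}^{r-1} χ^{-1}(a). In particular φ_χ has coefficients in Z_p. -/

import Mathlib

/-- The periodic first Bernoulli function: `B̄₁(x) = x - ⌊x⌋ - 1/2` for `x ∉ ℤ`,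
and `B̄₁(x) = 0` for `x ∈ ℤ`. -/
noncomputable def bernoulliB1 (x : ℚ) : ℚ :=
  if (⌊x⌋ : ℚ) = x then 0 else x - ⌊x⌋ - 1 / 2

open Classical in
/-- `χ⁻¹` extended to the natural numbers: `a ↦ χ(a)⁻¹ ∈ ℤ_p ⊆ ℚ_p` if `a` is prime
to `p`, and `0` otherwise. -/
noncomputable def chiInv {p : ℕ} [Fact p.Prime] (χ : (ZMod p)ˣ →* ℤ_[p]ˣ) (a : ℕ) : ℚ_[p] :=
  if h : IsUnit ((a : ZMod p)) then ((((χ h.unit)⁻¹ : ℤ_[p]ˣ) : ℤ_[p]) : ℚ_[p]) else 0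

/-!
Since `0 < r < N`, every `a ≡ r (mod N)` is prime to `N`, so the coprimality condition only
removes terms with `χ⁻¹(a) = 0`, and the coefficient is a sum over `a = r + kN`, `0 ≤ k < p`.
For these `B̄₁(a/(Np)) = r/(Np) + k/p - 1/2` and, as `N ≡ 1 (mod p)`, `χ⁻¹(a) = χ⁻¹(r + k)`.
The constant part vanishes because `χ⁻¹` sums to zero over a period, and sliding the window of
`∑ₖ k χ⁻¹(m + k)` from `m = 0` to `m = r` adds `p ∑_{a<r} χ⁻¹(a)`.

For integrality, `p B_{1,χ⁻¹} = ∑ₐ a χ⁻¹(a)`, whose reduction mod `p` is the sum of the character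
`a ↦ a χ⁻¹(a) mod p`. That character is nontrivial because the only character of `(ZMod p)ˣ` into
`ℤ_pˣ` lifting the identity is the Teichmüller character: a `(p-1)`-th root of unity that is
`≡ 1 (mod p)` equals `1`.
-/

open Finset Function

section Periodic

variable {M : Type*} [AddCancelCommMonoid M] {f : ℕ → M} {p : ℕ}

theorem Function.Periodic.sum_range_add (hf : Periodic f p) (m : ℕ) :
    ∑ k ∈ range p, f (m + k) = ∑ k ∈ range p, f k := by
  induction m with
  | zero => simp
  | succ m ih =>
    have h := sum_range_succ' (fun k => f (m + k)) p
    rw [sum_range_succ, hf, add_zero] at h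
    simpa only [add_right_cancel h, add_assoc, add_comm 1] using ih

theorem Function.Periodic.sum_range_nsmul_add (hf : Periodic f p) (m : ℕ) :
    ∑ k ∈ range p, k • f (m + k) + m • ∑ k ∈ range p, f k
      = ∑ k ∈ range p, k • f k + p • ∑ a ∈ range m, f a := by
  induction m with
  | zero => simp
  | succ m ih =>
    have hstep : ∑ k ∈ range p, k • f (m + 1 + k) + ∑ k ∈ range p, f k
        = ∑ k ∈ range p, k • f (m + k) + p • f m := by
      have h := sum_range_succ' (fun k => k • f (m + k)) p
      rw [sum_range_succ, hf, zero_smul, add_zero] at h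
      simp only [add_smul, one_smul, sum_add_distrib] at h
      rw [← hf.sum_range_add (m + 1), h]
      simp only [add_assoc, add_comm 1]
    calc _ = ∑ k ∈ range p, k • f (m + 1 + k) + ∑ k ∈ range p, f k
            + m • ∑ k ∈ range p, f k := by rw [succ_nsmul]; abel
      _ = ∑ k ∈ range p, k • f (m + k) + m • ∑ k ∈ range p, f k + p • f m := by
            rw [hstep]; abel
      _ = _ := by rw [ih, sum_range_succ, smul_add, add_assoc]

end Periodic

theorem bernoulliB1_natCast_div {n d : ℕ} (hn : 0 < n) (hnd : n < d) :
    bernoulliB1 (n / d) = n / d - 1 / 2 := by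
  have hd : (0 : ℚ) < d := by exact_mod_cast hn.trans hnd
  have hpos : (0 : ℚ) < n / d := by positivity
  have hfloor : ⌊(n : ℚ) / d⌋ = 0 :=
    Int.floor_eq_zero_iff.2 ⟨hpos.le, (div_lt_one hd).2 (by exact_mod_cast hnd)⟩
  simp [bernoulliB1, hfloor, hpos.ne]

section Field

variable {K : Type*} [Field K] [CharZero K] {f : ℕ → K} {p : ℕ}

theorem sum_range_bernoulliB1_div_mul (h0 : f 0 = 0) (hsum : ∑ a ∈ range p, f a = 0) :
    ∑ a ∈ range p, (bernoulliB1 (a / p) : K) * f a = (p : K)⁻¹ * ∑ a ∈ range p, a * f a := by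
  have hterm : ∀ a ∈ range p,
      (bernoulliB1 (a / p) : K) * f a = (p : K)⁻¹ * (a * f a) - 2⁻¹ * f a := by
    intro a ha
    rcases a.eq_zero_or_pos with rfl | ha0
    · simp [h0]
    · rw [bernoulliB1_natCast_div ha0 (mem_range.1 ha)]
      push_cast
      ring
  rw [sum_congr rfl hterm, sum_sub_distrib, ← mul_sum, ← mul_sum, hsum, mul_zero, sub_zero]

theorem Function.Periodic.sum_range_bernoulliB1_mul (hf : Periodic f p) (h0 : f 0 = 0)
    (hsum : ∑ a ∈ range p, f a = 0) {N r : ℕ} (hN : p ∣ N - 1) (hr0 : 0 < r) (hrN : r < N) :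
    ∑ k ∈ range p, (bernoulliB1 ((r + k * N : ℕ) / ((N : ℚ) * p)) : K) * f (r + k * N)
      = ∑ a ∈ range p, (bernoulliB1 (a / p) : K) * f a + ∑ a ∈ range r, f a := by
  obtain ⟨t, ht⟩ := hN
  have hNt : N = p * t + 1 := by omega
  have hp : (p : K) ≠ 0 := by
    rintro hp
    simp only [Nat.cast_eq_zero.1 hp, zero_mul, zero_add] at hNt
    omega
  have hterm : ∀ k ∈ range p,
      (bernoulliB1 ((r + k * N : ℕ) / ((N : ℚ) * p)) : K) * f (r + k * N)
        = ((r : K) / (N * p) - 2⁻¹) * f (r + k) + (p : K)⁻¹ * (k • f (r + k)) := by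
    intro k hk
    have hlt : r + k * N < N * p := by nlinarith [mem_range.1 hk]
    have hfk : f (r + k * N) = f (r + k) := by
      rw [show r + k * N = r + k + k * t * p by rw [hNt]; ring]
      exact hf.nat_mul _ _
    rw [hfk, show ((N : ℚ) * p) = ((N * p : ℕ) : ℚ) by push_cast; ring,
      bernoulliB1_natCast_div (by omega) hlt, nsmul_eq_mul]
    have hN0 : (N : K) ≠ 0 := by exact_mod_cast (by omega : N ≠ 0)
    push_cast
    field_simp
    ring
  have hshift := hf.sum_range_nsmul_add r
  rw [hsum, smul_zero, add_zero] at hshift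
  rw [sum_congr rfl hterm, sum_add_distrib, ← mul_sum, ← mul_sum, hf.sum_range_add, hsum,
    mul_zero, zero_add, hshift, sum_range_bernoulliB1_div_mul h0 hsum, mul_add, nsmul_eq_mul,
    inv_mul_cancel_left₀ hp]
  simp only [nsmul_eq_mul]

end Field

theorem sum_filter_mod_eq_sum_range {M : Type*} [AddCommMonoid M] (F : ℕ → M) {N r : ℕ}
    (hrN : r < N) (n : ℕ) :
    ∑ a ∈ (range (N * n)).filter (fun a => a % N = r), F a = ∑ k ∈ range n, F (r + k * N) := by
  symm
  refine sum_nbij' (fun k => r + k * N) (fun a => a / N) ?_ ?_ ?_ ?_ (fun _ _ => rfl)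
  · intro k hk
    simp only [mem_filter, mem_range] at hk ⊢
    refine ⟨by nlinarith, by simp [Nat.mod_eq_of_lt hrN]⟩
  · intro a ha
    simp only [mem_filter, mem_range] at ha ⊢
    exact Nat.div_lt_of_lt_mul ha.1
  · intro k _
    simp [Nat.add_mul_div_right _ _ (by omega : 0 < N), Nat.div_eq_of_lt hrN]
  · intro a ha
    simp only [mem_filter] at ha
    simp only [← ha.2, Nat.mod_add_div']

theorem sum_filter_coprime_mul_eq {M : Type*} [AddCommMonoid M] (F : ℕ → M) {N p r : ℕ}
    (hN : N.Prime) (hr : ¬ N ∣ r) (hF : ∀ a, ¬ a.Coprime p → F a = 0) (s : Finset ℕ) :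
    ∑ a ∈ s.filter (fun a => Nat.gcd a (N * p) = 1 ∧ a % N = r % N), F a
      = ∑ a ∈ s.filter (fun a => a % N = r % N), F a := by
  rw [sum_filter, sum_filter]
  refine sum_congr rfl fun a _ => ?_
  by_cases hap : a.Coprime p
  · by_cases ha : a % N = r % N
    · have haN : a.Coprime N := (hN.coprime_iff_not_dvd.2 fun h => hr <| by
        rwa [Nat.dvd_iff_mod_eq_zero, ← ha, ← Nat.dvd_iff_mod_eq_zero]).symm
      simp [ha, Nat.Coprime.mul_right haN hap]
    · simp [ha]
  · simp [hF a hap]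

theorem sum_range_natCast_zmod {M : Type*} [AddCommMonoid M] (p : ℕ) [NeZero p] (g : ZMod p → M) :
    ∑ a ∈ range p, g a = ∑ x : ZMod p, g x := by
  refine sum_nbij' (fun a => a) ZMod.val (fun _ _ => mem_univ _)
    (fun x _ => mem_range.2 x.val_lt) (fun a ha => ZMod.val_cast_of_lt (mem_range.1 ha))
    (fun x _ => ZMod.natCast_zmod_val x) (fun _ _ => rfl)

theorem eq_one_of_pow_eq_one_of_map_eq_one {R S : Type*} [Ring R] [NoZeroDivisors R] [Semiring S]
    (f : R →+* S) {x : R} {n : ℕ} (hn : (n : S) ≠ 0) (hxn : x ^ n = 1) (hfx : f x = 1) :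
    x = 1 := by
  have hgeom : (∑ i ∈ range n, x ^ i) * (x - 1) = 0 := by rw [geom_sum_mul, hxn, sub_self]
  have hsum : ∑ i ∈ range n, x ^ i ≠ 0 := fun h => hn (by simpa [hfx] using congrArg f h)
  exact sub_eq_zero.1 ((mul_eq_zero.1 hgeom).resolve_left hsum)

theorem PadicInt.unitHom_ext_of_toZMod {p : ℕ} [Fact p.Prime] {χ ω : (ZMod p)ˣ →* ℤ_[p]ˣ}
    (h : ∀ u, PadicInt.toZMod (χ u : ℤ_[p]) = PadicInt.toZMod (ω u : ℤ_[p])) : χ = ω := by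
  ext u
  have hp : ((p - 1 : ℕ) : ZMod p) ≠ 0 := by
    rw [Nat.cast_sub (Fact.out : p.Prime).one_le, ZMod.natCast_self, Nat.cast_one, zero_sub]
    exact neg_ne_zero.2 one_ne_zero
  have hpow : (((χ * ω⁻¹) u : ℤ_[p]ˣ) : ℤ_[p]) ^ (p - 1) = 1 := by
    rw [← Units.val_pow_eq_pow_val, ← map_pow, ZMod.units_pow_card_sub_one_eq_one, map_one,
      Units.val_one]
  have hred : PadicInt.toZMod (((χ * ω⁻¹) u : ℤ_[p]ˣ) : ℤ_[p]) = 1 := by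
    rw [MonoidHom.mul_apply, MonoidHom.inv_apply, Units.val_mul, map_mul, h, ← map_mul,
      ← Units.val_mul, mul_inv_cancel, Units.val_one, map_one]
  have hc := eq_one_of_pow_eq_one_of_map_eq_one PadicInt.toZMod hp hpow hred
  rw [Units.val_eq_one, MonoidHom.mul_apply, MonoidHom.inv_apply, mul_inv_eq_one] at hc
  rw [hc]

section chiInv

variable {p : ℕ} [Fact p.Prime] (χ : (ZMod p)ˣ →* ℤ_[p]ˣ)

theorem chiInv_eq (a : ℕ) :
    chiInv χ a = ((MulChar.ofUnitHom χ⁻¹ (a : ZMod p) : ℤ_[p]) : ℚ_[p]) := by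
  by_cases h : IsUnit (a : ZMod p)
  · rw [chiInv, dif_pos h]
    conv_rhs => rw [← h.unit_spec, MulChar.ofUnitHom_coe]
    rfl
  · rw [chiInv, dif_neg h, MulChar.map_nonunit _ h, PadicInt.coe_zero]

theorem chiInv_periodic : Periodic (chiInv χ) p := fun a => by simp [chiInv_eq]

theorem chiInv_zero : chiInv χ 0 = 0 := by simp [chiInv]

theorem chiInv_eq_zero_of_not_coprime {a : ℕ} (ha : ¬ a.Coprime p) : chiInv χ a = 0 := by
  rw [chiInv, dif_neg (by rwa [ZMod.isUnit_iff_coprime])]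

theorem sum_range_chiInv (hχ : χ ≠ 1) : ∑ a ∈ range p, chiInv χ a = 0 := by
  have hψ : MulChar.ofUnitHom χ⁻¹ ≠ 1 := fun h => hχ <| MonoidHom.ext fun u => by
    have h' := DFunLike.congr_fun h (u : ZMod p)
    rwa [MulChar.ofUnitHom_coe, MulChar.one_apply_coe, Units.val_eq_one, MonoidHom.inv_apply,
      inv_eq_one] at h'
  simp only [chiInv_eq, ← PadicInt.coe_sum, sum_range_natCast_zmod,
    MulChar.sum_eq_zero_of_ne_one hψ, PadicInt.coe_zero]

theorem exists_sum_range_mul_chiInv_eq_mul (ω : (ZMod p)ˣ →* ℤ_[p]ˣ)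
    (hω : ∀ u : (ZMod p)ˣ, PadicInt.toZMod (ω u : ℤ_[p]) = u) (hχω : χ ≠ ω) :
    ∃ y : ℤ_[p], ∑ a ∈ range p, (a : ℚ_[p]) * chiInv χ a = p * y := by
  set ψ : MulChar (ZMod p) ℤ_[p] := MulChar.ofUnitHom χ⁻¹
  set θ : MulChar (ZMod p) (ZMod p) :=
    MulChar.ofUnitHom (MonoidHom.id _) * ψ.ringHomComp PadicInt.toZMod
  have hθ : ∀ x, θ x = x * PadicInt.toZMod (ψ x) := fun x => by
    by_cases hx : IsUnit x
    · rw [MulChar.mul_apply, MulChar.ringHomComp_apply, ← hx.unit_spec, MulChar.ofUnitHom_coe]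
      rfl
    · rw [MulChar.map_nonunit _ hx, MulChar.map_nonunit _ hx, map_zero, mul_zero]
  have hθ1 : θ ≠ 1 := fun h => hχω <| PadicInt.unitHom_ext_of_toZMod fun u => by
    have h1 : (u : ZMod p) * PadicInt.toZMod ((χ u)⁻¹ : ℤ_[p]ˣ) = 1 := by
      rw [← MulChar.one_apply_coe u, ← h, hθ, MulChar.ofUnitHom_coe]
      rfl
    have h2 : PadicInt.toZMod ((χ u)⁻¹ : ℤ_[p]ˣ) * PadicInt.toZMod (χ u : ℤ_[p]) = 1 := by
      rw [← map_mul, ← Units.val_mul, inv_mul_cancel, Units.val_one, map_one]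
    rw [hω, left_inv_eq_right_inv h1 h2]
  obtain ⟨y, hy⟩ : ∃ y, y * (p : ℤ_[p]) = ∑ a ∈ range p, (a : ℤ_[p]) * ψ a := by
    rw [← Ideal.mem_span_singleton', ← PadicInt.maximalIdeal_eq_span_p, ← PadicInt.ker_toZMod,
      RingHom.mem_ker, map_sum]
    simp only [map_mul, map_natCast]
    rw [sum_range_natCast_zmod p (fun x => x * PadicInt.toZMod (ψ x))]
    simp only [← hθ, MulChar.sum_eq_zero_of_ne_one hθ1]
  refine ⟨y, ?_⟩
  have hyQ := congrArg ((↑) : ℤ_[p] → ℚ_[p]) hy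
  simp only [PadicInt.coe_mul, PadicInt.coe_sum, PadicInt.coe_natCast] at hyQ
  rw [mul_comm, hyQ]
  simp only [chiInv_eq, ψ]

end chiInv

/-- Let `p, N` be primes with `N ≡ 1 (mod p)` and `χ ≠ 1, ω` a character of `(Z/pZ)ˣ`
with values in `ℤ_p^×`. For `0 < r < N`, the coefficient of `[r⁻¹]` in the twisted
Stickelberger element `φ_χ = ∑_{a ∈ (Z/NpZ)ˣ} B̄₁(a/(Np))·χ⁻¹(a)·[a⁻¹]`, i.e. the sum
of `B̄₁(a/(Np))·χ⁻¹(a)` over the `a` with `a ≡ r (mod N)`, equals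
`B_{1,χ⁻¹} + ∑_{a=1}^{r-1} χ⁻¹(a)`; in particular it lies in `ℤ_p`. -/
theorem stickelberger_coefficient (p N : ℕ) [Fact p.Prime] (hN : N.Prime)
    (hdvd : p ∣ N - 1)
    (ω : (ZMod p)ˣ →* ℤ_[p]ˣ)
    (hω : ∀ a : (ZMod p)ˣ, PadicInt.toZMod ((ω a : ℤ_[p]ˣ) : ℤ_[p]) = (a : ZMod p))
    (χ : (ZMod p)ˣ →* ℤ_[p]ˣ) (hχ1 : χ ≠ 1) (hχω : χ ≠ ω)
    (r : ℕ) (hr0 : 0 < r) (hrN : r < N) :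
    (∑ a ∈ (Finset.range (N * p)).filter
          (fun a => Nat.gcd a (N * p) = 1 ∧ a % N = r % N),
        (bernoulliB1 ((a : ℚ) / ((N : ℚ) * p)) : ℚ_[p]) * chiInv χ a)
      = (∑ a ∈ Finset.range p, (bernoulliB1 ((a : ℚ) / (p : ℚ)) : ℚ_[p]) * chiInv χ a)
        + ∑ a ∈ Finset.range r, chiInv χ a
    ∧ ‖∑ a ∈ (Finset.range (N * p)).filter
          (fun a => Nat.gcd a (N * p) = 1 ∧ a % N = r % N),
        (bernoulliB1 ((a : ℚ) / ((N : ℚ) * p)) : ℚ_[p]) * chiInv χ a‖ ≤ 1 := by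
  have hsum := sum_range_chiInv χ hχ1
  have hcoef : ∑ a ∈ (range (N * p)).filter (fun a => Nat.gcd a (N * p) = 1 ∧ a % N = r % N),
        (bernoulliB1 ((a : ℚ) / ((N : ℚ) * p)) : ℚ_[p]) * chiInv χ a
      = ∑ a ∈ range p, (bernoulliB1 ((a : ℚ) / (p : ℚ)) : ℚ_[p]) * chiInv χ a
        + ∑ a ∈ range r, chiInv χ a := by
    rw [sum_filter_coprime_mul_eq _ hN (Nat.not_dvd_of_pos_of_lt hr0 hrN)
        (fun a ha => by rw [chiInv_eq_zero_of_not_coprime χ ha, mul_zero]),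
      Nat.mod_eq_of_lt hrN, sum_filter_mod_eq_sum_range _ hrN]
    exact (chiInv_periodic χ).sum_range_bernoulliB1_mul (chiInv_zero χ) hsum hdvd hr0 hrN
  obtain ⟨y, hy⟩ := exists_sum_range_mul_chiInv_eq_mul χ ω hω hχω
  have hB : ∑ a ∈ range p, (bernoulliB1 ((a : ℚ) / (p : ℚ)) : ℚ_[p]) * chiInv χ a = y := by
    have hp : (p : ℚ_[p]) ≠ 0 := by exact_mod_cast (Fact.out : p.Prime).ne_zero
    rw [sum_range_bernoulliB1_div_mul (chiInv_zero χ) hsum, hy, inv_mul_cancel_left₀ hp]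
  refine ⟨hcoef, ?_⟩
  rw [hcoef, hB]
  simp only [chiInv_eq, ← PadicInt.coe_sum, ← PadicInt.coe_add]
  rw [← PadicInt.norm_def]
  exact PadicInt.norm_le_one _
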